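/- arXiv:1204.2722 — 4 statements merged into one kernel-verified Lean document; each statement's English description precedes it below -/
import Mathlib

section
/- Let O₁, …, Oₙ be d×d complex matrices, each Hermitian, traceless (trace Oᵢ = 0), satisfying Oᵢ² = 1 (the identity matrix), and pairwise anticommuting: Oᵢ * Oⱼ = -(Oⱼ * Oᵢ) for all i ≠ j. Then for every d×d density matrix ρ, ∑_{i=1}^n (Re(trace(ρ * Oᵢ)))² ≤ 1. -/
open Matrix
open ComplexOrder

/-- A density matrix: positive semidefinite with trace 1. -/
def IsDensityMatrix {d : ℕ} (ρ : Matrix (Fin d) (Fin d) ℂ) : Prop :=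
  ρ.PosSemidef ∧ ρ.trace = 1

/-!
With `tᵢ = ⟨Oᵢ⟩` and `s = ∑ tᵢ²`, the observable `M = ∑ tᵢ Oᵢ` squares to `s • 1` by the
anticommutation relations, and its expectation is `⟨M⟩ = s`. Since variances are nonnegative,
`s² = ⟨M⟩² ≤ ⟨M²⟩ = s`, hence `s ≤ 1`.
-/

theorem sum_smul_mul_self_of_anticommute {ι R A : Type*} [CommSemiring R] [Ring A] [Module R A]
    [IsScalarTower R A A] [SMulCommClass R A A] [DecidableEq ι] (s : Finset ι) (c : ι → R)
    (O : ι → A) (hsq : ∀ i, O i * O i = 1) (hanti : ∀ i j, i ≠ j → O i * O j = -(O j * O i)) :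
    (∑ i ∈ s, c i • O i) * (∑ i ∈ s, c i • O i) = (∑ i ∈ s, c i ^ 2) • (1 : A) := by
  induction s using Finset.induction_on with
  | empty => simp
  | insert a s has ih =>
    set S := ∑ j ∈ s, c j • O j
    have hcross : O a * S + S * O a = 0 := by
      rw [Finset.mul_sum, Finset.sum_mul, ← Finset.sum_add_distrib]
      refine Finset.sum_eq_zero fun j hj => ?_
      rw [mul_smul_comm, smul_mul_assoc, ← smul_add,
        hanti a j (ne_of_mem_of_not_mem hj has).symm, neg_add_cancel, smul_zero]
    have hsq_a : c a • O a * (c a • O a) = c a ^ 2 • (1 : A) := by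
      rw [smul_mul_smul_comm, hsq, sq]
    rw [Finset.sum_insert has]
    calc (c a • O a + S) * (c a • O a + S)
        = c a • O a * (c a • O a) + c a • (O a * S + S * O a) + S * S := by
          simp only [add_mul, mul_add, smul_add, smul_mul_assoc, mul_smul_comm]; abel
      _ = (∑ i ∈ insert a s, c i ^ 2) • (1 : A) := by
          rw [hsq_a, hcross, ih, Finset.sum_insert has, add_smul, smul_zero, add_zero]

namespace Matrix

variable {n 𝕜 : Type*} [Fintype n] [RCLike 𝕜]

theorem PosSemidef.re_trace_mul_conjTranspose_mul_self_nonneg {ρ : Matrix n n 𝕜}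
    (hρ : ρ.PosSemidef) (N : Matrix n n 𝕜) : 0 ≤ RCLike.re (ρ * (Nᴴ * N)).trace := by
  rw [← Matrix.mul_assoc, trace_mul_comm, ← Matrix.mul_assoc]
  exact (RCLike.nonneg_iff.mp (hρ.mul_mul_conjTranspose_same N).trace_nonneg).1

theorem PosSemidef.re_trace_mul_sq_le [DecidableEq n] {ρ M : Matrix n n 𝕜} (hρ : ρ.PosSemidef)
    (hρ1 : ρ.trace = 1) (hM : M.IsHermitian) :
    RCLike.re (ρ * M).trace ^ 2 ≤ RCLike.re (ρ * (M * M)).trace := by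
  set a := RCLike.re (ρ * M).trace
  set N := M - (a : 𝕜) • (1 : Matrix n n 𝕜)
  have hN : Nᴴ = N := (hM.sub (isHermitian_one.smul (RCLike.conj_ofReal a))).eq
  have hexpand : (ρ * (Nᴴ * N)).trace =
      (ρ * (M * M)).trace - a * ((ρ * M).trace + (ρ * M).trace - a) := by
    rw [hN]
    simp only [N, sub_mul, mul_sub, Matrix.smul_mul, Matrix.mul_smul, Matrix.mul_one,
      Matrix.one_mul, trace_sub, trace_smul, hρ1, smul_eq_mul, smul_smul]
    ring
  have hvar := hρ.re_trace_mul_conjTranspose_mul_self_nonneg N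
  rw [hexpand] at hvar
  simp only [map_add, map_sub, RCLike.re_ofReal_mul, RCLike.ofReal_re] at hvar
  linarith

end Matrix

theorem sum_sq_expectation_anticommuting_le_one_general {d n : ℕ}
    (O : Fin n → Matrix (Fin d) (Fin d) ℂ)
    (hherm : ∀ i, (O i).IsHermitian)
    (hsq : ∀ i, O i * O i = 1)
    (hanti : ∀ i j, i ≠ j → O i * O j = -(O j * O i))
    (ρ : Matrix (Fin d) (Fin d) ℂ) (hρ : IsDensityMatrix ρ) :
    ∑ i, ((ρ * O i).trace.re) ^ 2 ≤ 1 := by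
  set t : Fin n → ℝ := fun i => (ρ * O i).trace.re
  set s := ∑ i, t i ^ 2
  set M := ∑ i, t i • O i
  have hM : M.IsHermitian :=
    isSelfAdjoint_sum _ fun i _ => (hherm i).smul (IsSelfAdjoint.all (t i))
  have hmean : (ρ * M).trace.re = s := by
    simp only [M, s, Finset.mul_sum, Matrix.mul_smul, trace_sum, trace_smul, Complex.re_sum,
      Complex.smul_re, smul_eq_mul, sq, t]
  have hsecond : (ρ * (M * M)).trace.re = s := by
    rw [sum_smul_mul_self_of_anticommute _ t O hsq hanti, Matrix.mul_smul, Matrix.mul_one,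
      trace_smul, hρ.2, Complex.smul_re, Complex.one_re, smul_eq_mul, mul_one]
  have hvar := hρ.1.re_trace_mul_sq_le hρ.2 hM
  rw [RCLike.re_to_complex, RCLike.re_to_complex, hmean, hsecond] at hvar
  nlinarith [Finset.sum_nonneg fun i (_ : i ∈ Finset.univ) => sq_nonneg (t i)]

/-- For Hermitian, traceless, pairwise anticommuting involutions `O i`, the sum of the
squared expectation values in any quantum state is at most 1. -/
theorem sum_sq_expectation_anticommuting_le_one {d n : ℕ}
    (O : Fin n → Matrix (Fin d) (Fin d) ℂ)
    (hherm : ∀ i, (O i).IsHermitian)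
    (htr : ∀ i, (O i).trace = 0)
    (hsq : ∀ i, O i * O i = 1)
    (hanti : ∀ i j, i ≠ j → O i * O j = -(O j * O i))
    (ρ : Matrix (Fin d) (Fin d) ℂ) (hρ : IsDensityMatrix ρ) :
    ∑ i, ((ρ * O i).trace.re) ^ 2 ≤ 1 :=
  sum_sq_expectation_anticommuting_le_one_general O hherm hsq hanti ρ hρ
end

section
/- Let A₁, …, A_M be Hermitian d_A×d_A complex matrices with Aᵢ² = 1, and B₁, …, B_M be Hermitian d_B×d_B complex matrices with Bᵢ² = 1. Assume: (i) for every i ≠ j, the pair cut-anticommutes, i.e., Aᵢ*Aⱼ = -(Aⱼ*Aᵢ) or Bᵢ*Bⱼ = -(Bⱼ*Bᵢ); (ii) every pair Aᵢ, Aⱼ either commutes or anticommutes, and every pair Bᵢ, Bⱼ either commutes or anticommutes. Then for every product density matrix ρ = ρ_A ⊗ ρ_B (Kronecker product of a d_A×d_A density matrix ρ_A and a d_B×d_B density matrix ρ_B), one has ∑_{i=1}^M (Re(trace(ρ * (Aᵢ ⊗ Bᵢ))))² ≤ 1. -/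
/-!
Factor `ρ_A = S_A S_Aᴴ`, `ρ_B = S_B S_Bᴴ` and regard matrices as vectors of the *real*
Hilbert–Schmidt space, `⟪X, Y⟫ = Re tr (Xᴴ Y)`. Then `Re tr (ρ_A A_i) = ⟪A_i S_A, S_A⟫`, the vectors
`A_i S_A` are unit vectors, and `⟪A_i S_A, A_j S_A⟫ = Re tr (ρ_A A_i A_j)` vanishes when `A_i` and
`A_j` anticommute, because `A_i A_j` is then skew-Hermitian; likewise for `B`. Hence the vectors
`A_i S_A ⊗ B_i S_B` are orthonormal in the real tensor product, and the claim is Bessel's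
inequality for the unit vector `S_A ⊗ S_B`. Working over `ℝ` is essential: over `ℂ` the product of
two purely imaginary inner products need not vanish.
-/

open Matrix Kronecker
open ComplexOrder

open scoped TensorProduct InnerProductSpace
open RCLike WithLp

theorem sum_sq_re_inner_mul_re_inner_le {𝕜 ι E F : Type*} [RCLike 𝕜] [Fintype ι]
    [NormedAddCommGroup E] [InnerProductSpace 𝕜 E] [NormedAddCommGroup F] [InnerProductSpace 𝕜 F]
    {x : ι → E} {y : ι → F} (hx : ∀ i, ‖x i‖ = 1) (hy : ∀ i, ‖y i‖ = 1)
    (horth : Pairwise fun i j ↦ re ⟪x i, x j⟫_𝕜 * re ⟪y i, y j⟫_𝕜 = 0) (u : E) (w : F) :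
    ∑ i, (re ⟪x i, u⟫_𝕜 * re ⟪y i, w⟫_𝕜) ^ 2 ≤ ‖u‖ ^ 2 * ‖w‖ ^ 2 := by
  let := InnerProductSpace.rclikeToReal 𝕜 E
  let := InnerProductSpace.rclikeToReal 𝕜 F
  have hv : Orthonormal ℝ fun i ↦ x i ⊗ₜ[ℝ] y i :=
    ⟨fun i ↦ by simp [hx i, hy i], fun _ _ hij ↦ horth hij⟩
  have := hv.sum_inner_products_le (u ⊗ₜ[ℝ] w) (s := Finset.univ)
  simp only [TensorProduct.inner_tmul, TensorProduct.norm_tmul, Real.norm_eq_abs, sq_abs,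
    mul_pow] at this ⊢
  exact this

namespace Matrix

variable {𝕜 n : Type*} [RCLike 𝕜] [Fintype n]

open scoped MatrixOrder in
theorem PosSemidef.exists_eq_mul_conjTranspose [DecidableEq n] {ρ : Matrix n n 𝕜}
    (hρ : ρ.PosSemidef) : ∃ S, ρ = S * Sᴴ :=
  CStarAlgebra.nonneg_iff_eq_mul_star_self.mp hρ.nonneg

theorem IsHermitian.star_trace_mul {ρ : Matrix n n 𝕜} (hρ : ρ.IsHermitian) (N : Matrix n n 𝕜) :
    star (ρ * N).trace = (ρ * Nᴴ).trace := by
  rw [← trace_conjTranspose, conjTranspose_mul, hρ.eq, trace_mul_comm]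

theorem IsHermitian.im_trace_mul_eq_zero {ρ G : Matrix n n 𝕜} (hρ : ρ.IsHermitian)
    (hG : G.IsHermitian) : im (ρ * G).trace = 0 :=
  conj_eq_iff_im.mp <| by rw [← star_def, hρ.star_trace_mul, hG.eq]

theorem IsHermitian.re_trace_mul_eq_zero {ρ N : Matrix n n 𝕜} (hρ : ρ.IsHermitian)
    (hN : Nᴴ = -N) : re (ρ * N).trace = 0 := by
  have h := congrArg re (hρ.star_trace_mul N)
  rw [hN, Matrix.mul_neg, trace_neg, star_def, conj_re, map_neg] at h
  linarith

theorem re_trace_kronecker_mul_kronecker {m : Type*} [Fintype m] {ρ G : Matrix n n 𝕜}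
    (hρ : ρ.IsHermitian) (hG : G.IsHermitian) (ρ' G' : Matrix m m 𝕜) :
    re ((ρ ⊗ₖ ρ') * (G ⊗ₖ G')).trace = re (ρ * G).trace * re (ρ' * G').trace := by
  rw [← mul_kronecker_mul, trace_kronecker, mul_re, hρ.im_trace_mul_eq_zero hG, zero_mul,
    sub_zero]

noncomputable def frobeniusVec {m : Type*} (X : Matrix m n 𝕜) : EuclideanSpace 𝕜 (n × m) :=
  toLp 2 X.vec

theorem inner_frobeniusVec {m : Type*} [Fintype m] (X Y : Matrix m n 𝕜) :
    ⟪X.frobeniusVec, Y.frobeniusVec⟫_𝕜 = (Xᴴ * Y).trace := by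
  rw [frobeniusVec, frobeniusVec, EuclideanSpace.inner_toLp_toLp, dotProduct_comm,
    star_vec_dotProduct_vec]

theorem inner_frobeniusVec_mul_mul (S G G' : Matrix n n 𝕜) :
    ⟪(G * S).frobeniusVec, (G' * S).frobeniusVec⟫_𝕜 = (S * Sᴴ * (Gᴴ * G')).trace := by
  rw [inner_frobeniusVec, conjTranspose_mul, mul_assoc S, trace_mul_comm S]
  simp only [mul_assoc]

theorem norm_frobeniusVec_mul_eq_one [DecidableEq n] {S G : Matrix n n 𝕜}
    (hS : (S * Sᴴ).trace = 1) (hG : Gᴴ * G = 1) : ‖(G * S).frobeniusVec‖ = 1 := by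
  have h : ‖(G * S).frobeniusVec‖ ^ 2 = 1 := by
    rw [@norm_sq_eq_re_inner 𝕜, inner_frobeniusVec_mul_mul, hG, Matrix.mul_one, hS, one_re]
  exact (pow_eq_one_iff_of_nonneg (norm_nonneg _) two_ne_zero).mp h

theorem re_inner_frobeniusVec_mul_mul_eq_zero (S : Matrix n n 𝕜) {G G' : Matrix n n 𝕜}
    (hG : G.IsHermitian) (hG' : G'.IsHermitian) (hanti : G * G' = -(G' * G)) :
    re ⟪(G * S).frobeniusVec, (G' * S).frobeniusVec⟫_𝕜 = 0 := by
  rw [inner_frobeniusVec_mul_mul, hG.eq]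
  refine (isHermitian_mul_conjTranspose_self S).re_trace_mul_eq_zero ?_
  rw [conjTranspose_mul, hG.eq, hG'.eq, hanti, neg_neg]

end Matrix

theorem product_state_sum_sq_le_one_general {dA dB M : ℕ}
    (A : Fin M → Matrix (Fin dA) (Fin dA) ℂ)
    (B : Fin M → Matrix (Fin dB) (Fin dB) ℂ)
    (hAherm : ∀ i, (A i).IsHermitian) (hBherm : ∀ i, (B i).IsHermitian)
    (hAsq : ∀ i, A i * A i = 1) (hBsq : ∀ i, B i * B i = 1)
    (hcut : ∀ i j, i ≠ j →
      (A i * A j = -(A j * A i)) ∨ (B i * B j = -(B j * B i)))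
    (ρA : Matrix (Fin dA) (Fin dA) ℂ) (ρB : Matrix (Fin dB) (Fin dB) ℂ)
    (hρA : IsDensityMatrix ρA) (hρB : IsDensityMatrix ρB) :
    ∑ i, (((ρA ⊗ₖ ρB) * (A i ⊗ₖ B i)).trace.re) ^ 2 ≤ 1 := by
  obtain ⟨hρA, htrA⟩ := hρA
  obtain ⟨hρB, htrB⟩ := hρB
  obtain ⟨SA, rfl⟩ := hρA.exists_eq_mul_conjTranspose
  obtain ⟨SB, rfl⟩ := hρB.exists_eq_mul_conjTranspose
  -- Inner products are only ever produced by the lemmas: written out here, `⟪·, ·⟫_ℂ` on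
  -- `EuclideanSpace ℂ _` would elaborate through the `CStarModule` instance instead.
  have key := sum_sq_re_inner_mul_re_inner_le (𝕜 := ℂ)
    (fun i ↦ norm_frobeniusVec_mul_eq_one htrA (by rw [(hAherm i).eq, hAsq i]))
    (fun i ↦ norm_frobeniusVec_mul_eq_one htrB (by rw [(hBherm i).eq, hBsq i]))
    ?orth (1 * SA).frobeniusVec (1 * SB).frobeniusVec
  case orth =>
    intro i j hij
    rcases hcut i j hij with h | h
    · rw [re_inner_frobeniusVec_mul_mul_eq_zero SA (hAherm i) (hAherm j) h, zero_mul]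
    · rw [re_inner_frobeniusVec_mul_mul_eq_zero SB (hBherm i) (hBherm j) h, mul_zero]
  rw [norm_frobeniusVec_mul_eq_one (G := 1) htrA (by simp),
    norm_frobeniusVec_mul_eq_one (G := 1) htrB (by simp)] at key
  simp only [inner_frobeniusVec_mul_mul, (hAherm _).eq, (hBherm _).eq, one_pow, mul_one] at key
  simpa only [← re_to_complex, re_trace_kronecker_mul_kronecker hρA.isHermitian (hAherm _)]

/-- For cut-anticommuting Hermitian involutions `Aᵢ ⊗ Bᵢ` whose factors pairwise commute
or anticommute, any product state `ρ_A ⊗ ρ_B` satisfies `∑ ⟨Aᵢ⊗Bᵢ⟩² ≤ 1`. -/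
theorem product_state_sum_sq_le_one {dA dB M : ℕ}
    (A : Fin M → Matrix (Fin dA) (Fin dA) ℂ)
    (B : Fin M → Matrix (Fin dB) (Fin dB) ℂ)
    (hAherm : ∀ i, (A i).IsHermitian) (hBherm : ∀ i, (B i).IsHermitian)
    (hAsq : ∀ i, A i * A i = 1) (hBsq : ∀ i, B i * B i = 1)
    (hcut : ∀ i j, i ≠ j →
      (A i * A j = -(A j * A i)) ∨ (B i * B j = -(B j * B i)))
    (hAcomm : ∀ i j, A i * A j = A j * A i ∨ A i * A j = -(A j * A i))
    (hBcomm : ∀ i j, B i * B j = B j * B i ∨ B i * B j = -(B j * B i))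
    (ρA : Matrix (Fin dA) (Fin dA) ℂ) (ρB : Matrix (Fin dB) (Fin dB) ℂ)
    (hρA : IsDensityMatrix ρA) (hρB : IsDensityMatrix ρB) :
    ∑ i, (((ρA ⊗ₖ ρB) * (A i ⊗ₖ B i)).trace.re) ^ 2 ≤ 1 :=
  product_state_sum_sq_le_one_general A B hAherm hBherm hAsq hBsq hcut ρA ρB hρA hρB
end

section
/- Let A₁, …, A_M be Hermitian d_A×d_A complex matrices with Aᵢ² = 1, and B₁, …, B_M be Hermitian d_B×d_B complex matrices with Bᵢ² = 1, such that for every i ≠ j the pair (A|B)-anticommutes (Aᵢ*Aⱼ = -(Aⱼ*Aᵢ) or Bᵢ*Bⱼ = -(Bⱼ*Bᵢ)), and every pair Aᵢ, Aⱼ and every pair Bᵢ, Bⱼ either commutes or anticommutes. Then for every separable state with respect to the cut A|B — i.e., every ρ of the form ρ = ∑_k p_k • (ρ_A^{(k)} ⊗ ρ_B^{(k)}) with p_k ≥ 0, ∑_k p_k = 1, and each ρ_A^{(k)}, ρ_B^{(k)} a density matrix — one has ∑_{i=1}^M (Re(trace(ρ * (Aᵢ ⊗ Bᵢ))))² ≤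 1. -/
open Matrix Kronecker
open ComplexOrder

/-!
By convexity of `x ↦ x²` it suffices to treat a product state `σ ⊗ τ`, for which
`⟨Aᵢ ⊗ Bᵢ⟩ = aᵢ bᵢ` with `aᵢ = Re tr(σ Aᵢ)`, `bᵢ = Re tr(τ Bᵢ)`. The real Gram matrices of
`(1, A₁, …, A_M)` and `(1, B₁, …, B_M)` for the semi-inner products `Re tr(σ X† Y)` and
`Re tr(τ X† Y)` are positive semidefinite, hence so is their Schur product. Since
`Re tr(σ Aᵢ Aⱼ) = 0` when `Aᵢ, Aⱼ` anticommute, and every pair `i ≠ j` anticommutes on one side,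
that product is the arrow matrix with unit diagonal and border `(aᵢ bᵢ)`; evaluating its quadratic
form at `(-1, a₁ b₁, …, a_M b_M)` gives `1 - ∑ (aᵢ bᵢ)² ≥ 0`.
-/

namespace Matrix

variable {n ι : Type*} [Fintype n]

lemma IsHermitian.im_trace_mul_eq_zero_s5 {X Y : Matrix n n ℂ} (hX : X.IsHermitian)
    (hY : Y.IsHermitian) : (X * Y).trace.im = 0 := by
  rw [← Complex.conj_eq_iff_im, ← Complex.star_def, ← trace_conjTranspose, conjTranspose_mul,
    hX.eq, hY.eq, trace_mul_comm]

lemma IsHermitian.re_trace_mul_mul_eq_zero_of_anticomm {σ X Y : Matrix n n ℂ}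
    (hσ : σ.IsHermitian) (hX : X.IsHermitian) (hY : Y.IsHermitian) (h : X * Y = -(Y * X)) :
    (σ * (X * Y)).trace.re = 0 := by
  have hstar : star (σ * (X * Y)).trace = -(σ * (X * Y)).trace := by
    rw [← trace_conjTranspose, conjTranspose_mul, conjTranspose_mul, hσ.eq, hX.eq, hY.eq,
      trace_mul_comm, ← trace_neg, ← Matrix.mul_neg, neg_eq_iff_eq_neg.2 h]
  have hre := congrArg Complex.re hstar
  rw [Complex.star_def, Complex.conj_re, Complex.neg_re] at hre
  linarith

lemma PosSemidef.re_trace_mul_conjTranspose_mul_self_nonneg_s5 {σ : Matrix n n ℂ}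
    (hσ : σ.PosSemidef) (X : Matrix n n ℂ) : 0 ≤ (σ * (Xᴴ * X)).trace.re := by
  have h := (hσ.mul_mul_conjTranspose_same X).trace_nonneg
  rw [Matrix.mul_assoc, trace_mul_comm, Matrix.mul_assoc] at h
  exact (Complex.nonneg_iff.1 h).1

def realGram (σ : Matrix n n ℂ) (F : ι → Matrix n n ℂ) : Matrix ι ι ℝ :=
  of fun s t => (σ * ((F s)ᴴ * F t)).trace.re

@[simp]
lemma realGram_apply (σ : Matrix n n ℂ) (F : ι → Matrix n n ℂ) (s t : ι) :
    realGram σ F s t = (σ * ((F s)ᴴ * F t)).trace.re := rfl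

lemma posSemidef_realGram [Fintype ι] {σ : Matrix n n ℂ} (hσ : σ.PosSemidef)
    (F : ι → Matrix n n ℂ) : (realGram σ F).PosSemidef := by
  refine .of_dotProduct_mulVec_nonneg ?_ fun x => ?_
  · ext s t
    have h := congrArg Complex.re (trace_conjTranspose (σ * ((F t)ᴴ * F s)))
    rw [conjTranspose_mul, conjTranspose_mul, conjTranspose_conjTranspose, hσ.isHermitian.eq,
      trace_mul_comm, Complex.star_def, Complex.conj_re] at h
    exact h.symm
  · refine (hσ.re_trace_mul_conjTranspose_mul_self_nonneg_s5 (∑ t, (x t : ℂ) • F t)).trans_eq ?_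
    simp only [conjTranspose_sum, conjTranspose_smul, Complex.star_def, Complex.conj_ofReal,
      Finset.sum_mul, Matrix.smul_mul, Finset.mul_sum, Matrix.mul_smul, trace_sum,
      trace_smul, Complex.re_sum, smul_eq_mul, Complex.re_ofReal_mul, dotProduct, mulVec,
      realGram_apply, star_trivial]
    rw [Finset.sum_comm]
    refine Finset.sum_congr rfl fun s _ => Finset.sum_congr rfl fun t _ => ?_
    ring

lemma re_trace_kronecker_mul_kronecker_s5 {m : Type*} [Fintype m] {σ A : Matrix n n ℂ}
    {τ B : Matrix m m ℂ} (hσ : σ.IsHermitian) (hA : A.IsHermitian) :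
    ((σ ⊗ₖ τ) * (A ⊗ₖ B)).trace.re = (σ * A).trace.re * (τ * B).trace.re := by
  rw [← mul_kronecker_mul, trace_kronecker, Complex.mul_re, hσ.im_trace_mul_eq_zero_s5 hA, zero_mul,
    sub_zero]

end Matrix

lemma sum_sq_le_one_of_posSemidef {ι : Type*} [Fintype ι] {M : Matrix (Option ι) (Option ι) ℝ}
    (hM : M.PosSemidef) (c : ι → ℝ) (h00 : M none none = 1) (h0 : ∀ i, M none (some i) = c i)
    (hdiag : ∀ i, M (some i) (some i) = 1) (hoff : ∀ i j, i ≠ j → M (some i) (some j) = 0) :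
    ∑ i, c i ^ 2 ≤ 1 := by
  have h0' : ∀ i, M (some i) none = c i := fun i => by
    simpa [h0] using hM.isHermitian.apply none (some i)
  have hrow : ∀ i, ∑ j, M (some i) (some j) * c j = c i := fun i => by
    rw [Fintype.sum_eq_single i fun j hj => by rw [hoff i j hj.symm, zero_mul], hdiag, one_mul]
  have h := hM.dotProduct_mulVec_nonneg fun s => s.elim (-1) c
  simp only [dotProduct, mulVec, Fintype.sum_option, Option.elim, star_trivial, h00, h0, h0',
    hrow, mul_neg_one, neg_add_cancel, mul_zero, Finset.sum_const_zero] at h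
  simp only [pow_two]
  linarith

lemma sum_sq_weighted_sum_le_one {ι κ : Type*} [Fintype ι] [Fintype κ] {p : κ → ℝ}
    (hp : ∀ k, 0 ≤ p k) (hp1 : ∑ k, p k = 1) {c : ι → κ → ℝ} (hc : ∀ k, ∑ i, c i k ^ 2 ≤ 1) :
    ∑ i, (∑ k, p k * c i k) ^ 2 ≤ 1 :=
  calc ∑ i, (∑ k, p k * c i k) ^ 2
      ≤ ∑ i, ∑ k, p k * c i k ^ 2 := Finset.sum_le_sum fun i _ =>
        even_two.convexOn_pow.map_sum_le (fun k _ => hp k) hp1 fun _ _ => Set.mem_univ _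
    _ = ∑ k, p k * ∑ i, c i k ^ 2 := by
        rw [Finset.sum_comm]
        simp_rw [Finset.mul_sum]
    _ ≤ ∑ k, p k * 1 := Finset.sum_le_sum fun k _ => mul_le_mul_of_nonneg_left (hc k) (hp k)
    _ = 1 := by simp [hp1]

lemma sum_sq_re_trace_mul_mul_le_one {ι m n : Type*} [Fintype ι] [Fintype m] [DecidableEq m]
    [Fintype n] [DecidableEq n] (A : ι → Matrix m m ℂ) (B : ι → Matrix n n ℂ)
    (hAherm : ∀ i, (A i).IsHermitian) (hBherm : ∀ i, (B i).IsHermitian)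
    (hAsq : ∀ i, A i * A i = 1) (hBsq : ∀ i, B i * B i = 1)
    (hcut : ∀ i j, i ≠ j → (A i * A j = -(A j * A i)) ∨ (B i * B j = -(B j * B i)))
    {σ : Matrix m m ℂ} {τ : Matrix n n ℂ} (hσ : σ.PosSemidef) (hσ1 : σ.trace = 1)
    (hτ : τ.PosSemidef) (hτ1 : τ.trace = 1) :
    ∑ i, ((σ * A i).trace.re * (τ * B i).trace.re) ^ 2 ≤ 1 := by
  refine sum_sq_le_one_of_posSemidef ((posSemidef_realGram hσ fun s => s.elim 1 A).hadamard
    (posSemidef_realGram hτ fun s => s.elim 1 B)) _ ?_ (fun i => ?_) (fun i => ?_) fun i j hij => ?_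
  · simp [hσ1, hτ1]
  · simp
  · simp [(hAherm i).eq, (hBherm i).eq, hAsq, hBsq, hσ1, hτ1]
  · rcases hcut i j hij with h | h
    · simp [(hAherm i).eq,
        hσ.isHermitian.re_trace_mul_mul_eq_zero_of_anticomm (hAherm i) (hAherm j) h]
    · simp [(hBherm i).eq,
        hτ.isHermitian.re_trace_mul_mul_eq_zero_of_anticomm (hBherm i) (hBherm j) h]

lemma re_trace_separable_mul_kronecker {κ m n : Type*} [Fintype κ] [Fintype m] [Fintype n]
    (p : κ → ℝ) {σ : κ → Matrix m m ℂ} {τ : κ → Matrix n n ℂ} (hσ : ∀ k, (σ k).IsHermitian)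
    {A : Matrix m m ℂ} (hA : A.IsHermitian) (B : Matrix n n ℂ) :
    ((∑ k, (p k : ℂ) • (σ k ⊗ₖ τ k)) * (A ⊗ₖ B)).trace.re
      = ∑ k, p k * ((σ k * A).trace.re * (τ k * B).trace.re) := by
  simp only [Finset.sum_mul, smul_mul, trace_sum, trace_smul, Complex.re_sum, smul_eq_mul,
    Complex.re_ofReal_mul, re_trace_kronecker_mul_kronecker_s5 (hσ _) hA]

theorem separable_state_sum_sq_le_one_general {dA dB M K : ℕ}
    (A : Fin M → Matrix (Fin dA) (Fin dA) ℂ)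
    (B : Fin M → Matrix (Fin dB) (Fin dB) ℂ)
    (hAherm : ∀ i, (A i).IsHermitian) (hBherm : ∀ i, (B i).IsHermitian)
    (hAsq : ∀ i, A i * A i = 1) (hBsq : ∀ i, B i * B i = 1)
    (hcut : ∀ i j, i ≠ j →
      (A i * A j = -(A j * A i)) ∨ (B i * B j = -(B j * B i)))
    (p : Fin K → ℝ) (hp : ∀ k, 0 ≤ p k) (hp1 : ∑ k, p k = 1)
    (ρA : Fin K → Matrix (Fin dA) (Fin dA) ℂ)
    (ρB : Fin K → Matrix (Fin dB) (Fin dB) ℂ)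
    (hρA : ∀ k, IsDensityMatrix (ρA k)) (hρB : ∀ k, IsDensityMatrix (ρB k))
    (ρ : Matrix (Fin dA × Fin dB) (Fin dA × Fin dB) ℂ)
    (hρ : ρ = ∑ k, (p k : ℂ) • (ρA k ⊗ₖ ρB k)) :
    ∑ i, ((ρ * (A i ⊗ₖ B i)).trace.re) ^ 2 ≤ 1 := by
  subst hρ
  simp_rw [re_trace_separable_mul_kronecker p (fun k => (hρA k).1.isHermitian) (hAherm _)]
  exact sum_sq_weighted_sum_le_one hp hp1 fun k =>
    sum_sq_re_trace_mul_mul_le_one A B hAherm hBherm hAsq hBsq hcut (hρA k).1 (hρA k).2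
      (hρB k).1 (hρB k).2

/-- For cut-anticommuting Hermitian involutions `Aᵢ ⊗ Bᵢ` whose factors pairwise commute
or anticommute, any state separable with respect to the cut `A|B` satisfies
`∑ ⟨Aᵢ⊗Bᵢ⟩² ≤ 1`. -/
theorem separable_state_sum_sq_le_one {dA dB M K : ℕ}
    (A : Fin M → Matrix (Fin dA) (Fin dA) ℂ)
    (B : Fin M → Matrix (Fin dB) (Fin dB) ℂ)
    (hAherm : ∀ i, (A i).IsHermitian) (hBherm : ∀ i, (B i).IsHermitian)
    (hAsq : ∀ i, A i * A i = 1) (hBsq : ∀ i, B i * B i = 1)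
    (hcut : ∀ i j, i ≠ j →
      (A i * A j = -(A j * A i)) ∨ (B i * B j = -(B j * B i)))
    (hAcomm : ∀ i j, A i * A j = A j * A i ∨ A i * A j = -(A j * A i))
    (hBcomm : ∀ i j, B i * B j = B j * B i ∨ B i * B j = -(B j * B i))
    (p : Fin K → ℝ) (hp : ∀ k, 0 ≤ p k) (hp1 : ∑ k, p k = 1)
    (ρA : Fin K → Matrix (Fin dA) (Fin dA) ℂ)
    (ρB : Fin K → Matrix (Fin dB) (Fin dB) ℂ)
    (hρA : ∀ k, IsDensityMatrix (ρA k)) (hρB : ∀ k, IsDensityMatrix (ρB k))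
    (ρ : Matrix (Fin dA × Fin dB) (Fin dA × Fin dB) ℂ)
    (hρ : ρ = ∑ k, (p k : ℂ) • (ρA k ⊗ₖ ρB k)) :
    ∑ i, ((ρ * (A i ⊗ₖ B i)).trace.re) ^ 2 ≤ 1 :=
  separable_state_sum_sq_le_one_general A B hAherm hBherm hAsq hBsq hcut p hp hp1 ρA ρB hρA hρB ρ hρ
end

section
/- Let A₁, …, Aₙ be Hermitian d_A×d_A complex matrices with Aᵢ² = 1 and B₁, …, Bₙ be Hermitian d_B×d_B complex matrices with Bᵢ² = 1, such that every pair Aᵢ, Aⱼ either commutes or anticommutes, and every pair Bᵢ, Bⱼ either commutes or anticommutes. Suppose there exist nonzero vectors ψ_A ∈ ℂ^{d_A} and ψ_B ∈ ℂ^{d_B} such that for each i the product vector ψ_A ⊗ ψ_B is an eigenvector of Aᵢ ⊗ Bᵢ with eigenvalue λᵢ ∈ {1, -1}. Then all the operators (A|B)-commute: for all i, j, Aᵢ*Aⱼ = Aⱼ*Aᵢ and Bᵢ*Bⱼ = Bⱼ*Bᵢ. -/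
/-!
Comparing the two sides of `(Aᵢ ⊗ Bᵢ)(ψ_A ⊗ ψ_B) = λᵢ (ψ_A ⊗ ψ_B)` entrywise shows that, since
`λᵢ ≠ 0`, the product `(Aᵢ ψ_A) ⊗ (Bᵢ ψ_B)` is a nonzero multiple of `ψ_A ⊗ ψ_B`; hence `ψ_A`
is an eigenvector of every `Aᵢ` and `ψ_B` of every `Bᵢ`, all with nonzero eigenvalues. If `Aᵢ`
and `Aⱼ` anticommuted, the common eigenvector `ψ_A` would give `μᵢμⱼ ψ_A = -μᵢμⱼ ψ_A` with
`μᵢμⱼ ≠ 0`, so they commute; likewise for the `Bᵢ`.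
-/

open Matrix Kronecker

theorem exists_ne_zero_eq_smul_of_mul_eq_mul_mul {K α β : Type*} [Field K]
    {u x : α → K} {v y : β → K} {c : K} (hc : c ≠ 0) (hx : x ≠ 0) (hy : y ≠ 0)
    (h : ∀ a b, u a * v b = c * (x a * y b)) : ∃ μ : K, μ ≠ 0 ∧ u = μ • x := by
  obtain ⟨a₀, hx₀⟩ := Function.ne_iff.mp hx
  obtain ⟨b₀, hy₀⟩ := Function.ne_iff.mp hy
  have hv₀ : v b₀ ≠ 0 := fun hv =>
    mul_ne_zero hc (mul_ne_zero hx₀ hy₀) (by rw [← h, hv, mul_zero])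
  refine ⟨c * y b₀ / v b₀, div_ne_zero (mul_ne_zero hc hy₀) hv₀, funext fun a => ?_⟩
  simp only [Pi.smul_apply, smul_eq_mul]
  field_simp
  linear_combination h a b₀

theorem kronecker_mulVec_mul {R m n : Type*} [CommSemiring R] [Fintype m] [Fintype n]
    (M : Matrix m m R) (N : Matrix n n R) (x : m → R) (y : n → R) :
    (M ⊗ₖ N) *ᵥ (fun p : m × n => x p.1 * y p.2) =
      fun p : m × n => (M *ᵥ x) p.1 * (N *ᵥ y) p.2 := by
  ext ⟨a, b⟩
  simp only [mulVec, dotProduct, kroneckerMap_apply, Fintype.sum_prod_type, Finset.sum_mul_sum]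
  exact Finset.sum_congr rfl fun _ _ => Finset.sum_congr rfl fun _ _ => mul_mul_mul_comm ..

theorem exists_eigenvalues_of_kronecker_mulVec_mul_eq_smul {K m n : Type*} [Field K]
    [Fintype m] [Fintype n] {M : Matrix m m K} {N : Matrix n n K} {x : m → K} {y : n → K}
    {c : K} (hc : c ≠ 0) (hx : x ≠ 0) (hy : y ≠ 0)
    (h : (M ⊗ₖ N) *ᵥ (fun p : m × n => x p.1 * y p.2) = c • fun p : m × n => x p.1 * y p.2) :
    (∃ μ : K, μ ≠ 0 ∧ M *ᵥ x = μ • x) ∧ ∃ ν : K, ν ≠ 0 ∧ N *ᵥ y = ν • y := by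
  rw [kronecker_mulVec_mul] at h
  have hentry : ∀ a b, (M *ᵥ x) a * (N *ᵥ y) b = c * (x a * y b) :=
    fun a b => congrFun h (a, b)
  refine ⟨exists_ne_zero_eq_smul_of_mul_eq_mul_mul hc hx hy hentry,
    exists_ne_zero_eq_smul_of_mul_eq_mul_mul (v := M *ᵥ x) hc hy hx fun b a => ?_⟩
  rw [mul_comm, hentry, mul_comm (x a)]

theorem mul_eq_zero_of_anticommute_of_mulVec_eq_smul {K m : Type*} [Field K] [CharZero K]
    [Fintype m] {M N : Matrix m m K} {x : m → K} {μ ν : K} (hx : x ≠ 0)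
    (hM : M *ᵥ x = μ • x) (hN : N *ᵥ x = ν • x) (hanti : M * N = -(N * M)) : μ * ν = 0 := by
  have hself : (μ * ν) • x = -((μ * ν) • x) :=
    calc (μ * ν) • x = (M * N) *ᵥ x := by
          rw [← mulVec_mulVec, hN, mulVec_smul, hM, smul_smul, mul_comm]
      _ = -((N * M) *ᵥ x) := by rw [hanti, neg_mulVec]
      _ = -((μ * ν) • x) := by rw [← mulVec_mulVec, hM, mulVec_smul, hN, smul_smul]
  exact (smul_eq_zero.mp (self_eq_neg.mp hself)).resolve_right hx

theorem mul_comm_of_mulVec_eq_smul {K m : Type*} [Field K] [CharZero K] [Fintype m]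
    {M N : Matrix m m K} {x : m → K} {μ ν : K} (hx : x ≠ 0) (hμ : μ ≠ 0) (hν : ν ≠ 0)
    (hM : M *ᵥ x = μ • x) (hN : N *ᵥ x = ν • x)
    (h : M * N = N * M ∨ M * N = -(N * M)) : M * N = N * M :=
  h.resolve_right fun hanti =>
    mul_ne_zero hμ hν (mul_eq_zero_of_anticommute_of_mulVec_eq_smul hx hM hN hanti)

theorem common_product_eigenvector_implies_cut_commute_general {dA dB n : ℕ}
    (A : Fin n → Matrix (Fin dA) (Fin dA) ℂ)
    (B : Fin n → Matrix (Fin dB) (Fin dB) ℂ)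
    (hAcomm : ∀ i j, A i * A j = A j * A i ∨ A i * A j = -(A j * A i))
    (hBcomm : ∀ i j, B i * B j = B j * B i ∨ B i * B j = -(B j * B i))
    (ψA : Fin dA → ℂ) (ψB : Fin dB → ℂ) (hψA : ψA ≠ 0) (hψB : ψB ≠ 0)
    (lam : Fin n → ℂ) (hlam : ∀ i, lam i = 1 ∨ lam i = -1)
    (heig : ∀ i, (A i ⊗ₖ B i) *ᵥ (fun p : Fin dA × Fin dB => ψA p.1 * ψB p.2) =
      lam i • (fun p : Fin dA × Fin dB => ψA p.1 * ψB p.2)) :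
    ∀ i j, A i * A j = A j * A i ∧ B i * B j = B j * B i := by
  have hfactors (i : Fin n) :=
    exists_eigenvalues_of_kronecker_mulVec_mul_eq_smul
      (by rcases hlam i with h | h <;> simp [h]) hψA hψB (heig i)
  intro i j
  obtain ⟨⟨μi, hμi, hAi⟩, νi, hνi, hBi⟩ := hfactors i
  obtain ⟨⟨μj, hμj, hAj⟩, νj, hνj, hBj⟩ := hfactors j
  exact ⟨mul_comm_of_mulVec_eq_smul hψA hμi hμj hAi hAj (hAcomm i j),
    mul_comm_of_mulVec_eq_smul hψB hνi hνj hBi hBj (hBcomm i j)⟩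

/-- If a product vector `ψ_A ⊗ ψ_B` is a common eigenvector of the operators
`Aᵢ ⊗ Bᵢ` with eigenvalues `±1`, where each pair `Aᵢ, Aⱼ` and each pair `Bᵢ, Bⱼ`
either commutes or anticommutes, then all the operators `(A|B)`-commute. -/
theorem common_product_eigenvector_implies_cut_commute {dA dB n : ℕ}
    (A : Fin n → Matrix (Fin dA) (Fin dA) ℂ)
    (B : Fin n → Matrix (Fin dB) (Fin dB) ℂ)
    (hAherm : ∀ i, (A i).IsHermitian) (hBherm : ∀ i, (B i).IsHermitian)
    (hAsq : ∀ i, A i * A i = 1) (hBsq : ∀ i, B i * B i = 1)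
    (hAcomm : ∀ i j, A i * A j = A j * A i ∨ A i * A j = -(A j * A i))
    (hBcomm : ∀ i j, B i * B j = B j * B i ∨ B i * B j = -(B j * B i))
    (ψA : Fin dA → ℂ) (ψB : Fin dB → ℂ) (hψA : ψA ≠ 0) (hψB : ψB ≠ 0)
    (lam : Fin n → ℂ) (hlam : ∀ i, lam i = 1 ∨ lam i = -1)
    (heig : ∀ i, (A i ⊗ₖ B i) *ᵥ (fun p : Fin dA × Fin dB => ψA p.1 * ψB p.2) =
      lam i • (fun p : Fin dA × Fin dB => ψA p.1 * ψB p.2)) :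
    ∀ i j, A i * A j = A j * A i ∧ B i * B j = B j * B i :=
  common_product_eigenvector_implies_cut_commute_general A B hAcomm hBcomm ψA ψB hψA hψB lam hlam
    heig
end
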